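/- arXiv:1205.3122 — 4 statements merged into one kernel-verified Lean document; each statement's English description precedes it below -/
import Mathlib

section
/- If Y is locally connected and t : E₁ → E₂ is a bijective continuous map with p₂ ∘ t = p₁ for covering maps p₁ : E₁ → Y and p₂ : E₂ → Y, then t is a homeomorphism. -/
/-- A bijective morphism of coverings of a locally connected space is a
homeomorphism. -/
theorem stmt_7 {E₁ E₂ Y : Type*} [TopologicalSpace E₁] [TopologicalSpace E₂]
    [TopologicalSpace Y] [LocallyConnectedSpace Y]
    (p₁ : E₁ → Y) (p₂ : E₂ → Y) (hp₁ : IsCoveringMap p₁) (hp₂ : IsCoveringMap p₂)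
    (t : E₁ → E₂) (ht : Continuous t) (hbij : Function.Bijective t)
    (hcomm : p₂ ∘ t = p₁) :
    IsHomeomorph t := by
  have hloc : IsLocalHomeomorph t :=
    IsLocalHomeomorph.of_comp (hcomm ▸ hp₁.isLocalHomeomorph) hp₂.isLocalHomeomorph ht
  exact ⟨ht, hloc.isOpenMap, hbij⟩
end

section
/- Consider the pullback of a covering map p : E → Y along f : X → Y, with basepoints f(x₀) = p(e₀). Let z₁ = (x₀,e₁) be any point of the fiber over x₀, and Z the connected component of f*(E) containing z₁. Then the image of π₁(Z, z₁) under (f*(p))_* in π₁(X, x₀) equals the preimage under f_* : π₁(X,x₀) → π₁(Y, f(x₀)) of the image of p_* : π₁(E, e₁) → π₁(Y, f(x₀)). -/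
open Set unitInterval

section Aux

variable {E Y : Type*} [TopologicalSpace E] [TopologicalSpace Y] {p : E → Y}

/-- The evenly covered neighbourhood of a point. -/
def covU (hp : IsCoveringMap p) (y : Y) : Set Y := (hp y).2.choose

lemma covU_open (hp : IsCoveringMap p) (y : Y) : IsOpen (covU hp y) :=
  (hp y).2.choose_spec.2.1

lemma mem_covU (hp : IsCoveringMap p) (y : Y) : y ∈ covU hp y :=
  (hp y).2.choose_spec.1

lemma covU_nonempty (hp : IsCoveringMap p) {y : Y} (e : E) (he : p e ∈ covU hp y) :
    Nonempty (p ⁻¹' {y}) := by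
  obtain ⟨H, -⟩ := (hp y).2.choose_spec.2.2.2
  exact ⟨(H ⟨e, he⟩).2⟩

/-- On a preconnected set, a continuous lift through a covering map that starts on a given
sheet of a trivialization stays on that sheet. -/
lemma lift_eq_chart (hp : IsCoveringMap p) {A : Type*} [TopologicalSpace A] {s : Set A}
    (hs : IsPreconnected s) {h : A → Y} (hh : ContinuousOn h s)
    {F : Type*} [TopologicalSpace F] (T : Bundle.Trivialization F p)
    (hbase : ∀ a ∈ s, h a ∈ T.baseSet)
    {g : A → E} (hg : ContinuousOn g s) (hlift : ∀ a ∈ s, p (g a) = h a)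
    {a₀ : A} (ha₀ : a₀ ∈ s) {m : F}
    (hstart : g a₀ = T.toOpenPartialHomeomorph.symm (h a₀, m)) :
    ∀ a ∈ s, g a = T.toOpenPartialHomeomorph.symm (h a, m) := by
  have hmem : ∀ a ∈ s, ((h a, m) : Y × F) ∈ T.target := fun a ha => T.mem_target.2 (hbase a ha)
  have hg₂ : ContinuousOn (fun a => T.toOpenPartialHomeomorph.symm (h a, m)) s :=
    T.toOpenPartialHomeomorph.continuousOn_symm.comp (hh.prodMk continuousOn_const) hmem
  exact hp.eqOn_of_comp_eqOn hs hg hg₂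
    (fun a ha => by
      show p (g a) = p _
      rw [hlift a ha, T.proj_symm_apply (hmem a ha)]) ha₀ hstart

/-- Icc in the unit interval is preconnected. -/
lemma isPreconnected_Icc_I (u v : I) : IsPreconnected (Icc u v : Set I) := by
  have himg : Subtype.val '' (Icc u v : Set I) = Icc (u : ℝ) (v : ℝ) := by
    ext z
    constructor
    · rintro ⟨w, hw, rfl⟩
      exact ⟨hw.1, hw.2⟩
    · rintro ⟨h1, h2⟩
      exact ⟨⟨z, ⟨u.2.1.trans h1, h2.trans v.2.2⟩⟩, ⟨h1, h2⟩, rfl⟩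
  have := isPreconnected_Icc (a := (u : ℝ)) (b := (v : ℝ))
  rw [← himg] at this
  exact (Topology.IsInducing.subtypeVal.isPreconnected_image).mp this

/-- Path lifting for covering maps. -/
lemma exists_path_lift (hp : IsCoveringMap p) {γ : I → Y} (hγ : Continuous γ)
    (e : E) (he : p e = γ 0) :
    ∃ g : I → E, Continuous g ∧ (∀ t, p (g t) = γ t) ∧ g 0 = e := by
  classical
  -- Lebesgue number for the cover by preimages of evenly covered sets
  obtain ⟨δ, δpos, hδ⟩ := lebesgue_number_lemma_of_metric (s := (univ : Set I))
    (c := fun y : Y => γ ⁻¹' covU hp y) isCompact_univ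
    (fun y => (covU_open hp y).preimage hγ)
    (fun t _ => mem_iUnion.2 ⟨γ t, mem_covU hp (γ t)⟩)
  obtain ⟨n, hn⟩ := exists_nat_one_div_lt δpos
  set N : ℕ := n + 1 with hN
  have hNpos : (0:ℝ) < N := by positivity
  have hstep : (1:ℝ)/N < δ := by exact_mod_cast hn
  -- the grid points
  have hmem : ∀ k : ℕ, min ((k:ℝ)/N) 1 ∈ I := fun k =>
    ⟨le_min (by positivity) zero_le_one, min_le_right _ _⟩
  set a : ℕ → I := fun k => ⟨min ((k:ℝ)/N) 1, hmem k⟩ with ha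
  have hak : ∀ k : ℕ, k ≤ N → (a k : ℝ) = (k:ℝ)/N := by
    intro k hk
    exact min_eq_left (by
      rw [div_le_one hNpos]; exact_mod_cast hk)
  -- main induction
  have main : ∀ k : ℕ, k ≤ N → ∃ g : I → E, Continuous g ∧
      (∀ t : I, (t:ℝ) ≤ (k:ℝ)/N → p (g t) = γ t) ∧ g 0 = e ∧
      (∀ t : I, (k:ℝ)/N ≤ (t:ℝ) → g t = g (a k)) := by
    intro k
    induction k with
    | zero =>
      intro _
      refine ⟨fun _ => e, continuous_const, ?_, rfl, fun _ _ => rfl⟩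
      intro t ht
      have : (t:ℝ) = 0 := le_antisymm (by simpa using ht) t.2.1
      have ht0 : t = 0 := Subtype.ext (by simpa using this)
      rw [ht0]; exact he
    | succ k ih =>
      intro hk1
      have hk : k ≤ N := Nat.le_of_succ_le hk1
      obtain ⟨g, hgc, hglift, hg0, hgconst⟩ := ih hk
      have hab : (a k : ℝ) < (a (k+1) : ℝ) := by
        rw [hak k hk, hak (k+1) hk1]
        have : (k:ℝ) < (k+1:ℕ) := by push_cast; linarith
        exact div_lt_div_of_pos_right this hNpos
      -- choose an evenly covered set around γ over [a k, a (k+1)]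
      obtain ⟨y, hbally⟩ := hδ (a k) (mem_univ _)
      haveI : Nonempty (p ⁻¹' {y}) := covU_nonempty hp (g (a k))
        (by rw [hglift (a k) (by rw [hak k hk])]; exact hbally (Metric.mem_ball_self δpos))
      set T := (hp y).toTrivialization with hT
      have hsubset : ∀ t : I, (a k : ℝ) ≤ (t:ℝ) → (t:ℝ) ≤ (a (k+1) : ℝ) → γ t ∈ T.baseSet := by
        intro t h1 h2
        apply hbally
        rw [Metric.mem_ball, Subtype.dist_eq, Real.dist_eq]
        have hBA : (a (k+1) : ℝ) - (a k : ℝ) = 1/N := by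
          rw [hak k hk, hak (k+1) hk1]; push_cast; ring
        have : |(t:ℝ) - (a k : ℝ)| ≤ 1/N := by
          rw [abs_le]; constructor <;> linarith
        exact lt_of_le_of_lt this hstep
      have hx : p (g (a k)) = γ (a k) := hglift (a k) (by rw [hak k hk])
      set x := g (a k) with hxdef
      -- the clamped parameter
      have hclmem : ∀ t : I, max (a k : ℝ) (min (t:ℝ) (a (k+1) : ℝ)) ∈ I := by
        intro t
        constructor
        · exact le_max_of_le_left (a k).2.1
        · exact max_le (a k).2.2 (le_trans (min_le_right _ _) (a (k+1)).2.2)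
      set clamp : I → I := fun t => ⟨max (a k : ℝ) (min (t:ℝ) (a (k+1) : ℝ)), hclmem t⟩
        with hclampdef
      have hclampc : Continuous clamp :=
        Continuous.subtype_mk (continuous_const.max (continuous_subtype_val.min
          continuous_const)) _
      have hclamp_mem : ∀ t, γ (clamp t) ∈ T.baseSet := fun t =>
        hsubset _ (le_max_left _ _) (max_le hab.le (min_le_right _ _))
      set m := (T x).2 with hm
      set g2 : I → E := fun t => T.toOpenPartialHomeomorph.symm (γ (clamp t), m) with hg2def
      have hg2c : Continuous g2 :=
        T.toOpenPartialHomeomorph.continuousOn_symm.comp_continuous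
          ((hγ.comp hclampc).prodMk continuous_const)
          (fun t => T.mem_target.2 (hclamp_mem t))
      have hxsrc : x ∈ T.source := T.mem_source.2 (hx ▸ hsubset (a k) le_rfl hab.le)
      have hclamp_a : clamp (a k) = a k := by
        apply Subtype.ext
        show max (a k : ℝ) (min (a k : ℝ) (a (k+1) : ℝ)) = (a k : ℝ)
        rw [min_eq_left hab.le, max_self]
      have hclamp_b : clamp (a (k+1)) = a (k+1) := by
        apply Subtype.ext
        show max (a k : ℝ) (min (a (k+1) : ℝ) (a (k+1) : ℝ)) = (a (k+1) : ℝ)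
        rw [min_self, max_eq_right hab.le]
      have hg2a : g2 (a k) = x := by
        show T.toOpenPartialHomeomorph.symm (γ (clamp (a k)), m) = x
        rw [hclamp_a, ← hx]
        exact T.symm_apply_mk_proj hxsrc
      have hg2lift : ∀ t : I, p (g2 t) = γ (clamp t) := fun t =>
        T.proj_symm_apply (T.mem_target.2 (hclamp_mem t))
      classical
      refine ⟨fun t => if (t:ℝ) ≤ (a k : ℝ) then g t else g2 t, ?_, ?_, ?_, ?_⟩
      · exact Continuous.if_le hgc hg2c continuous_subtype_val continuous_const
          (fun t ht => by
            have htak : t = a k := Subtype.ext ht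
            rw [htak, hg2a])
      · intro t ht
        by_cases h : (t:ℝ) ≤ (a k : ℝ)
        · simp only [if_pos h]
          exact hglift t (by rw [← hak k hk]; exact h)
        · simp only [if_neg h]
          push_neg at h
          have htB : (t:ℝ) ≤ (a (k+1) : ℝ) := by rw [hak (k+1) hk1]; exact ht
          have hct : clamp t = t := by
            apply Subtype.ext
            show max (a k : ℝ) (min (t:ℝ) (a (k+1) : ℝ)) = (t:ℝ)
            rw [min_eq_left htB, max_eq_right h.le]
          rw [hg2lift t, hct]
      · have h0 : ((0:I):ℝ) ≤ (a k : ℝ) := (a k).2.1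
        simp only [if_pos h0]
        exact hg0
      · intro t ht
        have htB : (a (k+1) : ℝ) ≤ (t:ℝ) := by rw [hak (k+1) hk1]; exact ht
        have h1 : ¬ ((t:ℝ) ≤ (a k : ℝ)) := not_le.2 (lt_of_lt_of_le hab htB)
        have h2 : ¬ ((a (k+1) : ℝ) ≤ (a k : ℝ)) := not_le.2 hab
        simp only [if_neg h1, if_neg h2]
        have hct : clamp t = a (k+1) := by
          apply Subtype.ext
          show max (a k : ℝ) (min (t:ℝ) (a (k+1) : ℝ)) = (a (k+1) : ℝ)
          rw [min_eq_right htB, max_eq_right hab.le]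
        rw [hg2def]
        simp only []
        rw [hct, hclamp_b]
  obtain ⟨g, hgc, hglift, hg0, -⟩ := main N le_rfl
  refine ⟨g, hgc, fun t => hglift t ?_, hg0⟩
  rw [div_self (ne_of_gt hNpos)]
  exact t.2.2


/-- Endpoints of lifts of a homotopy with fixed endpoints are constant. -/
lemma endpoint_eq (hp : IsCoveringMap p) {H : I × I → Y} (hH : Continuous H)
    {y₀ y₁ : Y} (h0 : ∀ s, H (s, 0) = y₀) (h1 : ∀ s, H (s, 1) = y₁)
    {g₀ g₁ : I → E} (hg₀ : Continuous g₀) (hg₁ : Continuous g₁)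
    (c₀ : ∀ t, p (g₀ t) = H (0, t)) (c₁ : ∀ t, p (g₁ t) = H (1, t))
    (hstart : g₀ 0 = g₁ 0) : g₀ 1 = g₁ 1 := by
  classical
  set e : E := g₀ 0 with hedef
  have he : ∀ s : I, p e = H (s, 0) := by
    intro s
    rw [hedef, c₀ 0, h0 0, h0 s]
  -- lifts of all the intermediate paths
  have hex : ∀ s : I, ∃ g : I → E, Continuous g ∧ (∀ t, p (g t) = H (s, t)) ∧ g 0 = e :=
    fun s => exists_path_lift hp (hH.comp (continuous_const.prodMk continuous_id)) e (he s)
  choose L hLc hLlift hL0 using hex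
  -- uniqueness identifies L 0 and L 1
  have hL0g : L 0 = g₀ := by
    refine hp.eq_of_comp_eq (hLc 0) hg₀ (funext fun t => ?_) 0 ((hL0 0).trans hedef)
    show p (L 0 t) = p (g₀ t)
    rw [hLlift, c₀]
  have hL1g : L 1 = g₁ := by
    refine hp.eq_of_comp_eq (hLc 1) hg₁ (funext fun t => ?_) 0 ((hL0 1).trans hstart)
    show p (L 1 t) = p (g₁ t)
    rw [hLlift, c₁]
  -- Lebesgue number for the square
  obtain ⟨δ, δpos, hδ⟩ := lebesgue_number_lemma_of_metric (s := (univ : Set (I × I)))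
    (c := fun y : Y => H ⁻¹' covU hp y) isCompact_univ
    (fun y => (covU_open hp y).preimage hH)
    (fun z _ => mem_iUnion.2 ⟨H z, mem_covU hp (H z)⟩)
  obtain ⟨n, hn⟩ := exists_nat_one_div_lt (half_pos δpos)
  set N : ℕ := n + 1 with hN
  have hNpos : (0:ℝ) < N := by positivity
  have hstep : (1:ℝ)/N < δ/2 := by exact_mod_cast hn
  have hmem : ∀ k : ℕ, min ((k:ℝ)/N) 1 ∈ I := fun k =>
    ⟨le_min (by positivity) zero_le_one, min_le_right _ _⟩
  set a : ℕ → I := fun k => ⟨min ((k:ℝ)/N) 1, hmem k⟩ with ha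
  have hak : ∀ k : ℕ, k ≤ N → (a k : ℝ) = (k:ℝ)/N := by
    intro k hk
    exact min_eq_left (by rw [div_le_one hNpos]; exact_mod_cast hk)
  have haN : a N = 1 := by
    apply Subtype.ext
    show ((a N : ℝ)) = 1
    rw [hak N le_rfl, div_self (ne_of_gt hNpos)]
  -- local constancy of s ↦ L s 1
  have key : ∀ s₀ s : I, dist s s₀ < δ/2 → L s 1 = L s₀ 1 := by
    intro s₀ s hss₀
    set J : Set I := Icc (min s s₀) (max s s₀) with hJ
    have hsJ : s ∈ J := ⟨min_le_left _ _, le_max_left _ _⟩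
    have hs₀J : s₀ ∈ J := ⟨min_le_right _ _, le_max_right _ _⟩
    have hJdist : ∀ s' ∈ J, dist s' s₀ < δ/2 := by
      intro s' hs'
      rw [Subtype.dist_eq, Real.dist_eq]
      rw [Subtype.dist_eq, Real.dist_eq] at hss₀
      have h1 : (min s s₀ : ℝ) ≤ (s' : ℝ) := hs'.1
      have h2 : (s' : ℝ) ≤ (max s s₀ : ℝ) := hs'.2
      have hmin : (min s s₀ : ℝ) = min (s:ℝ) (s₀:ℝ) := rfl
      have hmax : (max s s₀ : ℝ) = max (s:ℝ) (s₀:ℝ) := rfl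
      rw [hmin] at h1; rw [hmax] at h2
      rw [abs_lt] at hss₀ ⊢
      rcases le_total (s:ℝ) (s₀:ℝ) with hle | hle
      · rw [min_eq_left hle] at h1; rw [max_eq_right hle] at h2
        constructor <;> linarith
      · rw [min_eq_right hle] at h1; rw [max_eq_left hle] at h2
        constructor <;> linarith
    have hJpre : IsPreconnected J := isPreconnected_Icc_I _ _
    -- continuity (on J) of s' ↦ L s' (a k), by induction on k
    have main : ∀ k : ℕ, k ≤ N → ∃ c : I → E, ContinuousOn c J ∧
        ∀ s' ∈ J, c s' = L s' (a k) := by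
      intro k
      induction k with
      | zero =>
        intro _
        refine ⟨fun _ => e, continuousOn_const, fun s' _ => ?_⟩
        have ha0 : a 0 = 0 := by
          apply Subtype.ext
          have : ((a 0 : ℝ)) = 0 := by rw [hak 0 (Nat.zero_le N)]; simp
          simpa using this
        rw [ha0, hL0]
      | succ k ih =>
        intro hk1
        have hk : k ≤ N := Nat.le_of_succ_le hk1
        obtain ⟨c, hcc, hceq⟩ := ih hk
        have hab : (a k : ℝ) < (a (k+1) : ℝ) := by
          rw [hak k hk, hak (k+1) hk1]
          have : (k:ℝ) < ((k+1:ℕ):ℝ) := by push_cast; linarith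
          exact div_lt_div_of_pos_right this hNpos
        have habI : a k ≤ a (k+1) := Subtype.coe_le_coe.mp hab.le
        obtain ⟨y, hbally⟩ := hδ (s₀, a k) (mem_univ _)
        haveI : Nonempty (p ⁻¹' {y}) := covU_nonempty hp (L s₀ (a k))
          (by rw [hLlift]; exact hbally (Metric.mem_ball_self δpos))
        set T := (hp y).toTrivialization with hT
        have hsubset : ∀ s' ∈ J, ∀ t : I, (a k : ℝ) ≤ (t:ℝ) → (t:ℝ) ≤ (a (k+1) : ℝ) →
            H (s', t) ∈ T.baseSet := by
          intro s' hs' t ht1 ht2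
          apply hbally
          rw [Metric.mem_ball, Prod.dist_eq]
          apply max_lt
          · exact lt_of_lt_of_le (hJdist s' hs') (by linarith)
          · rw [Subtype.dist_eq, Real.dist_eq]
            have hBA : (a (k+1) : ℝ) - (a k : ℝ) = 1/N := by
              rw [hak k hk, hak (k+1) hk1]; push_cast; ring
            have habs : |(t:ℝ) - (a k:ℝ)| ≤ 1/N := by
              rw [abs_le]; constructor <;> linarith
            calc |(t:ℝ) - (a k:ℝ)| ≤ 1/N := habs
              _ < δ/2 := hstep
              _ < δ := by linarith
        have hIccpre : IsPreconnected (Icc (a k) (a (k+1)) : Set I) := isPreconnected_Icc_I _ _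
        have hpc : ∀ s' ∈ J, p (c s') = H (s', a k) := by
          intro s' hs'
          rw [hceq s' hs', hLlift]
        have hcsrc : ∀ s' ∈ J, c s' ∈ T.source := by
          intro s' hs'
          exact T.mem_source.2 (by rw [hpc s' hs']; exact hsubset s' hs' (a k) le_rfl hab.le)
        have hform : ∀ s' ∈ J, L s' (a (k+1)) =
            T.toOpenPartialHomeomorph.symm (H (s', a (k+1)), (T (c s')).2) := by
          intro s' hs'
          have hstart' : L s' (a k) =
              T.toOpenPartialHomeomorph.symm (H (s', a k), (T (c s')).2) := by
            rw [← hceq s' hs', ← hpc s' hs']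
            exact (T.symm_apply_mk_proj (hcsrc s' hs')).symm
          have := lift_eq_chart hp hIccpre
            (Continuous.continuousOn (hH.comp (continuous_const.prodMk continuous_id)))
            T (fun t ht => hsubset s' hs' t (Subtype.coe_le_coe.2 ht.1) (Subtype.coe_le_coe.2 ht.2))
            ((hLc s').continuousOn) (fun t _ => hLlift s' t)
            (left_mem_Icc.mpr habI) hstart'
          exact this (a (k+1)) (right_mem_Icc.mpr habI)
        refine ⟨fun s' => T.toOpenPartialHomeomorph.symm (H (s', a (k+1)), (T (c s')).2), ?_, ?_⟩
        · apply T.toOpenPartialHomeomorph.continuousOn_symm.comp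
          · apply ContinuousOn.prodMk
            · exact (hH.comp (continuous_id.prodMk continuous_const)).continuousOn
            · have hh1 : ContinuousOn (⇑T.toOpenPartialHomeomorph ∘ c) J :=
                ContinuousOn.comp T.toOpenPartialHomeomorph.continuousOn hcc
                  (fun s' hs' => hcsrc s' hs')
              exact continuous_snd.comp_continuousOn hh1
          · intro s' hs'
            exact T.mem_target.2 (hsubset s' hs' (a (k+1)) hab.le le_rfl)
        · intro s' hs'
          exact (hform s' hs').symm
    obtain ⟨c, hcc, hceq⟩ := main N le_rfl
    have hpc : ∀ s' ∈ J, ∀ s'' ∈ J, p (c s') = p (c s'') := by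
      intro s' hs' s'' hs''
      rw [hceq s' hs', hceq s'' hs'', haN, hLlift, hLlift, h1, h1]
    have := hp.constOn_of_comp hJpre hcc hpc hsJ hs₀J
    rw [hceq s hsJ, hceq s₀ hs₀J, haN] at this
    exact this
  -- clopen argument
  set A : Set I := {s | L s 1 = L 0 1} with hA
  have hAopen : IsOpen A := by
    rw [Metric.isOpen_iff]
    intro s₀ hs₀
    exact ⟨δ/2, half_pos δpos, fun s hs => by
      show L s 1 = L 0 1
      rw [key s₀ s hs]; exact hs₀⟩
  have hAcopen : IsOpen Aᶜ := by
    rw [Metric.isOpen_iff]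
    intro s₀ hs₀
    exact ⟨δ/2, half_pos δpos, fun s hs => by
      show ¬ (L s 1 = L 0 1)
      rw [key s₀ s hs]; exact hs₀⟩
  have huniv : A = univ := IsClopen.eq_univ ⟨by rw [← isClosed_compl_iff] at hAcopen; simpa using hAcopen, hAopen⟩ ⟨0, rfl⟩
  have h1A : L 1 1 = L 0 1 := by
    have : (1:I) ∈ A := huniv.symm ▸ mem_univ (1:I)
    exact this
  rw [← hL0g, ← hL1g]
  exact h1A.symm


lemma homotopic_cast {X : Type*} [TopologicalSpace X] {x y x' y' : X}
    (hx : x' = x) (hy : y' = y) {s1 t1 : Path x y} (h : s1.Homotopic t1) :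
    (s1.cast hx hy).Homotopic (t1.cast hx hy) := by
  subst hx; subst hy
  have h1 : s1.cast rfl rfl = s1 := by ext t; rfl
  have h2 : t1.cast rfl rfl = t1 := by ext t; rfl
  rw [h1, h2]; exact h

end Aux

/-- The image of `π₁` of a based component of the pullback of a covering map:
`(f*(p))_*(π₁(Z,z₁)) = f_*⁻¹(p_*(π₁(E,e₁)))`, expressed via homotopy classes
of loops. -/
theorem stmt_15 {X Y E : Type*} [TopologicalSpace X] [TopologicalSpace Y]
    [TopologicalSpace E]
    (f : X → Y) (hf : Continuous f) (p : E → Y) (hp : IsCoveringMap p)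
    (x₀ : X) (e₁ : E) (h₁ : f x₀ = p e₁) :
    ∀ α : Path x₀ x₀,
      ((∃ β : Path (⟨(x₀, e₁), h₁⟩ : {q : X × E // f q.1 = p q.2})
              (⟨(x₀, e₁), h₁⟩ : {q : X × E // f q.1 = p q.2}),
          Set.range β ⊆ connectedComponent (⟨(x₀, e₁), h₁⟩ : {q : X × E // f q.1 = p q.2}) ∧
          (β.map (continuous_fst.comp continuous_subtype_val)).Homotopic α) ↔
        ∃ γ : Path e₁ e₁, (γ.map hp.continuous).Homotopic ((α.map hf).cast h₁.symm h₁.symm)) := by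
  intro α
  constructor
  · rintro ⟨β, -, hhom⟩
    have hsnd : Continuous fun q : {q : X × E // f q.1 = p q.2} => q.val.2 :=
      continuous_snd.comp continuous_subtype_val
    refine ⟨β.map hsnd, ?_⟩
    have h2 : ((β.map (continuous_fst.comp continuous_subtype_val)).map hf).Homotopic
        (α.map hf) := by
      have := hhom.map (⟨f, hf⟩ : C(X, Y))
      exact this
    have heq : ((β.map hsnd).map hp.continuous) =
        ((β.map (continuous_fst.comp continuous_subtype_val)).map hf).cast h₁.symm h₁.symm := by
      ext t
      exact ((β t).prop).symm
    rw [heq]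
    exact homotopic_cast h₁.symm h₁.symm h2
  · rintro ⟨γ, hγ⟩
    obtain ⟨F⟩ := hγ
    set H : I × I → Y := fun z => F z with hHdef
    have hHc : Continuous H := F.continuous
    have h00 : ∀ s, H (s, 0) = p e₁ := by
      intro s
      have h := F.eq_fst s (show (0:I) ∈ ({0,1} : Set I) from Or.inl rfl)
      show F (s, 0) = p e₁
      rw [h]
      simp [γ.source]
    have h11 : ∀ s, H (s, 1) = p e₁ := by
      intro s
      have h := F.eq_fst s (show (1:I) ∈ ({0,1} : Set I) from Or.inr rfl)
      show F (s, 1) = p e₁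
      rw [h]
      simp [γ.target]
    have hzero : ∀ t, p (γ t) = H (0, t) := by
      intro t
      have h := F.apply_zero t
      show p (γ t) = F (0, t)
      rw [h]
      simp
    have hone : ∀ t, H (1, t) = f (α t) := by
      intro t
      have h := F.apply_one t
      show F (1, t) = f (α t)
      rw [h]
      simp
    obtain ⟨g, hgc, hglift, hg0⟩ := exists_path_lift hp
      (hHc.comp (continuous_const.prodMk continuous_id)) e₁ (h00 1).symm
    have hends : γ 1 = g 1 := by
      refine endpoint_eq hp hHc h00 h11 γ.continuous hgc hzero (fun t => hglift t) ?_
      rw [γ.source, hg0]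
    have hend : g 1 = e₁ := by rw [← hends, γ.target]
    have hβprop : ∀ t : I, f (α t) = p (g t) := fun t => ((hglift t).trans (hone t)).symm
    set βf : I → {q : X × E // f q.1 = p q.2} := fun t => ⟨(α t, g t), hβprop t⟩ with hβf
    have hβc : Continuous βf := Continuous.subtype_mk (α.continuous.prodMk hgc) _
    set β : Path (⟨(x₀, e₁), h₁⟩ : {q : X × E // f q.1 = p q.2})
        (⟨(x₀, e₁), h₁⟩ : {q : X × E // f q.1 = p q.2}) :=
      { toFun := βf
        continuous_toFun := hβc
        source' := Subtype.ext (Prod.ext (by simp [hβf, α.source]) (by simp [hβf, hg0]))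
        target' := Subtype.ext (Prod.ext (by simp [hβf, α.target]) (by simp [hβf, hend])) }
      with hβ
    refine ⟨β, ?_, ?_⟩
    · have hconn : IsConnected (Set.range β) := isConnected_range β.continuous
      have h0mem : (⟨(x₀, e₁), h₁⟩ : {q : X × E // f q.1 = p q.2}) ∈ Set.range β :=
        ⟨0, β.source⟩
      exact hconn.isPreconnected.subset_connectedComponent h0mem
    · have heq : β.map (continuous_fst.comp continuous_subtype_val) = α := by
        ext t
        rfl
      rw [heq]
end

section
/- Let f : X → Y be continuous with Y locally connected. If the induced map on connected components Γ(X) → Γ(Y) is surjective, then the pullback functor f* on the category of coverings of Y is faithful: whenever p₁ : E₁ → Y and p₂ : E₂ → Y are covering maps and t₁, t₂ : E₁ → E₂ are morphisms over Y with f*(t₁) = f*(t₂), then t₁ = t₂. -/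
open Set

/-- Image of a connected component under a covering map with locally connected
base contains the connected component of the image point. -/
lemma aux_component_subset_image {E Y : Type*} [TopologicalSpace E] [TopologicalSpace Y]
    [LocallyConnectedSpace Y] {p : E → Y} (hp : IsCoveringMap p) (e : E) :
    connectedComponent (p e) ⊆ p '' connectedComponent e := by
  set T : Set Y := p '' connectedComponent e with hT
  have key : closure T ⊆ interior T := by
    intro y hy
    have hne : Nonempty (p ⁻¹' {y}) := by
      obtain ⟨_, V, hyV, hVo, _, H, _⟩ := hp y
      obtain ⟨_, hy'V, a, _, ha⟩ := mem_closure_iff.mp hy V hVo hyV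
      exact ⟨(H ⟨a, show p a ∈ V from ha ▸ hy'V⟩).2⟩
    obtain ⟨hd, t, hyb⟩ : DiscreteTopology (p ⁻¹' {y}) ∧
        ∃ t : Bundle.Trivialization (p ⁻¹' {y}) p, y ∈ t.baseSet :=
      ⟨(hp y).1, (hp y).toTrivialization, (hp y).mem_toTrivialization_baseSet⟩
    obtain ⟨U, ⟨hUo, hyU, hUconn⟩, hUsub⟩ :=
      (LocallyConnectedSpace.open_connected_basis y).mem_iff.mp (t.open_baseSet.mem_nhds hyb)
    obtain ⟨y', hy'U, a, haC, ha⟩ := mem_closure_iff.mp hy U hUo hyU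
    set i := (t a).2
    have hasrc : a ∈ t.source := t.mem_source.mpr (ha ▸ hUsub hy'U)
    set g : Y → E := fun u => t.toOpenPartialHomeomorph.symm (u, i) with hg
    have hgcont : ContinuousOn g U := by
      apply t.toOpenPartialHomeomorph.continuousOn_symm.comp
        (Continuous.continuousOn (by continuity))
      intro u hu
      exact t.mem_target.mpr (hUsub hu)
    have hpg : ∀ u ∈ U, p (g u) = u := fun u hu =>
      t.proj_symm_apply (t.mem_target.mpr (hUsub hu))
    have hga : g y' = a := by
      have : (t a : Y × _) = (y', i) := Prod.ext (by rw [t.coe_fst hasrc, ha]) rfl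
      rw [hg]
      simp only [← this]
      exact t.toOpenPartialHomeomorph.left_inv hasrc
    have hgU : g '' U ⊆ connectedComponent e := by
      rw [connectedComponent_eq haC]
      exact (hUconn.image g hgcont).isPreconnected.subset_connectedComponent
        ⟨y', hy'U, hga⟩
    apply mem_interior.mpr ⟨U, ?_, hUo, hyU⟩
    intro u hu
    exact ⟨g u, hgU ⟨u, hu, rfl⟩, hpg u hu⟩
  have hclopen : IsClopen T :=
    ⟨isClosed_of_closure_subset (key.trans interior_subset),
     by rw [← subset_interior_iff_isOpen]; exact subset_closure.trans key⟩
  exact isPreconnected_connectedComponent.subset_isClopen hclopen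
    ⟨p e, mem_connectedComponent, e, mem_connectedComponent, rfl⟩

/-- If `Y` is locally connected and every connected component of `Y` meets the
image of `f`, then the pullback functor on coverings of `Y` is faithful. -/
theorem stmt_18 {X Y E₁ E₂ : Type*} [TopologicalSpace X] [TopologicalSpace Y]
    [TopologicalSpace E₁] [TopologicalSpace E₂] [LocallyConnectedSpace Y]
    (f : X → Y) (hf : Continuous f)
    (hsurj : ∀ y : Y, ∃ x : X, f x ∈ connectedComponent y)
    (p₁ : E₁ → Y) (p₂ : E₂ → Y) (hp₁ : IsCoveringMap p₁) (hp₂ : IsCoveringMap p₂)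
    (t₁ t₂ : E₁ → E₂) (ht₁ : Continuous t₁) (ht₂ : Continuous t₂)
    (hc₁ : p₂ ∘ t₁ = p₁) (hc₂ : p₂ ∘ t₂ = p₁)
    (hpb : ∀ (x : X) (e : E₁), f x = p₁ e → t₁ e = t₂ e) :
    t₁ = t₂ := by
  have he : p₂ ∘ t₁ = p₂ ∘ t₂ := hc₁.trans hc₂.symm
  have hclopen : IsClopen {e | t₁ e = t₂ e} :=
    ⟨hp₂.isSeparatedMap.isClosed_eqLocus ht₁ ht₂ he,
     hp₂.isLocalHomeomorph.isLocallyInjective.isOpen_eqLocus ht₁ ht₂ he⟩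
  funext e
  obtain ⟨x, hx⟩ := hsurj (p₁ e)
  obtain ⟨e', he'C, he'⟩ := aux_component_subset_image hp₁ e hx
  exact isPreconnected_connectedComponent.subset_isClopen hclopen
    ⟨e', he'C, hpb x e' he'.symm⟩ mem_connectedComponent
end

section
/- Let f : X → Y be continuous with Y locally connected. If some connected component of Y is disjoint from the image of f, then the pullback functor f* on coverings of Y is not faithful: there exist a covering p : E → Y and two distinct morphisms t₁ ≠ t₂ : p → p over Y with f*(t₁) = f*(t₂). -/
/-- The identity trivialization of `Prod.fst : Y × Bool → Y`. -/
noncomputable def trivFst {Y : Type*} [TopologicalSpace Y] :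
    Bundle.Trivialization Bool (Prod.fst : Y × Bool → Y) where
  toOpenPartialHomeomorph := OpenPartialHomeomorph.refl (Y × Bool)
  baseSet := Set.univ
  open_baseSet := isOpen_univ
  source_eq := rfl
  target_eq := by simp [OpenPartialHomeomorph.refl_target]; ext e; simp [Bool.eq_false_or_eq_true e.2]
  proj_toFun := by intros; rfl

theorem isCoveringMap_fst {Y : Type*} [TopologicalSpace Y] :
    IsCoveringMap (Prod.fst : Y × Bool → Y) :=
  IsCoveringMap.mk _ (fun _ => Bool) (fun _ => trivFst) (fun _ => Set.mem_univ _)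

/-- If `Y` is locally connected and some connected component of `Y` misses the
image of `f`, then the pullback functor on coverings of `Y` is not faithful:
there are a covering of `Y` and two distinct morphisms with equal pullbacks. -/
theorem stmt_19 {X : Type*} {Y : Type u} [TopologicalSpace X] [TopologicalSpace Y]
    [LocallyConnectedSpace Y]
    (f : X → Y) (hf : Continuous f)
    (hmiss : ∃ y : Y, ∀ x : X, f x ∉ connectedComponent y) :
    ∃ (E : Type u) (_ : TopologicalSpace E) (p : E → Y) (t₁ t₂ : E → E),
      IsCoveringMap p ∧ Continuous t₁ ∧ Continuous t₂ ∧
      p ∘ t₁ = p ∧ p ∘ t₂ = p ∧ t₁ ≠ t₂ ∧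
      ∀ (x : X) (e : E), f x = p e → t₁ e = t₂ e := by
  classical
  obtain ⟨y, hy⟩ := hmiss
  set C := connectedComponent y with hC
  have hCclopen : IsClopen C := ⟨isClosed_connectedComponent,
    isOpen_connectedComponent⟩
  refine ⟨Y × Bool, inferInstance, Prod.fst, id,
    fun e => if e.1 ∈ C then (e.1, !e.2) else e,
    isCoveringMap_fst, continuous_id, ?_, rfl, ?_, ?_, ?_⟩
  · apply Continuous.if
    · intro a ha
      have : frontier {e : Y × Bool | e.1 ∈ C} = ∅ := by
        have : IsClopen {e : Y × Bool | e.1 ∈ C} :=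
          ⟨hCclopen.1.preimage continuous_fst, hCclopen.2.preimage continuous_fst⟩
        simpa using this.frontier_eq
      simp [this] at ha
    · exact continuous_fst.prodMk ((continuous_of_discreteTopology (f := Bool.not)).comp continuous_snd)
    · exact continuous_id
  · funext e; by_cases h : e.1 ∈ C <;> simp [h]
  · intro h
    have := congrFun h (y, true)
    simp [hC, mem_connectedComponent] at this
  · intro x e he
    have : e.1 ∉ C := by rw [← he] at *; exact hy x
    simp [this]
end
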